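/- Suppose F = fromBlocks(F',0,U,F'') ∈ M_{(s'+s'')×(t'+t'')}(A) is admissible. Then for every row vector Y'' ∈ A^{t''}, Y'' lies in the image of the map ·F'' : A^{s''} → A^{t''} if and only if there exists a row vector X ∈ A^{s'+s''} with X·F = (0, Y''). (In the notation of the paper: the image of f'' equals (image of f) ∩ N''.) -/

import Mathlib

open Matrix

theorem Matrix.vecMul_fromBlocks_zero_eq_sumElim_iff {l m n o α : Type*} [Fintype n] [Fintype o]
    [NonUnitalNonAssocSemiring α] (A : Matrix n l α) (C : Matrix o l α) (D : Matrix o m α)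
    (x : n ⊕ o → α) (y : l → α) (z : m → α) :
    x ᵥ* fromBlocks A 0 C D = Sum.elim y z ↔
      (x ∘ Sum.inl) ᵥ* A + (x ∘ Sum.inr) ᵥ* C = y ∧ (x ∘ Sum.inr) ᵥ* D = z := by
  rw [vecMul_fromBlocks, vecMul_zero, zero_add, Sum.elim_eq_iff]

/-- For an admissible block lower-triangular matrix
`F = fromBlocks F' 0 U F''`, a row vector `Y''` lies in the image of `·F''`
iff `(0, Y'')` lies in the image of `·F`. -/
theorem image_block_right {A : Type*} [Ring A] {s' s'' t' t'' : ℕ}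
    (F' : Matrix (Fin s') (Fin t') A) (U : Matrix (Fin s'') (Fin t') A)
    (F'' : Matrix (Fin s'') (Fin t'') A)
    (hadm : ∀ X'' : Fin s'' → A, ∃ X' : Fin s' → A,
      Matrix.vecMul X'' U = Matrix.vecMul X' F')
    (Y'' : Fin t'' → A) :
    (∃ X'' : Fin s'' → A, Matrix.vecMul X'' F'' = Y'') ↔
      (∃ X : Fin s' ⊕ Fin s'' → A,
        Matrix.vecMul X (Matrix.fromBlocks F' 0 U F'') = Sum.elim (0 : Fin t' → A) Y'') := by
  constructor
  · rintro ⟨X'', rfl⟩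
    -- admissibility lets `-X'` cancel the contribution `X'' ᵥ* U` to the first block
    obtain ⟨X', hX'⟩ := hadm X''
    refine ⟨Sum.elim (-X') X'', (vecMul_fromBlocks_zero_eq_sumElim_iff ..).2 ⟨?_, rfl⟩⟩
    simp [neg_vecMul, hX']
  · rintro ⟨X, hX⟩
    exact ⟨X ∘ Sum.inr, ((vecMul_fromBlocks_zero_eq_sumElim_iff ..).1 hX).2⟩
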